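/- For a BSC with crossover probability p ∈ [0,1], the symmetric capacity I = 1 − h₂(p) and Bhattacharyya parameter Z = 2√(p(1−p)) satisfy I² + Z² ≤ 1. -/
import Mathlib


/-- The binary entropy function (in bits). -/
noncomputable def binEnt (p : ℝ) : ℝ :=
  -p * Real.logb 2 p - (1 - p) * Real.logb 2 (1 - p)

private lemma philem_upper (t : ℝ) (h0 : 0 ≤ t) (h1 : t ≤ 1) :
    (1 + t) * Real.log (1 + t) ≤ 2 * t * Real.log 2 := by
  have h := Real.convexOn_mul_log.2 (show (1:ℝ) ∈ Set.Ici 0 by norm_num)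
    (show (2:ℝ) ∈ Set.Ici 0 by norm_num)
    (show (0:ℝ) ≤ 1 - t by linarith) h0 (show (1 - t) + t = 1 by ring)
  simp only [smul_eq_mul] at h
  have harg : (1 - t) * 1 + t * 2 = 1 + t := by ring
  rw [harg] at h
  simp only [Real.log_one] at h
  linarith

private lemma philem_neg (t : ℝ) (h0 : 0 ≤ t) (h1 : t ≤ 1) :
    (1 - t) * Real.log (1 - t) ≤ 0 := by
  have h := Real.convexOn_mul_log.2 (show (0:ℝ) ∈ Set.Ici 0 by norm_num)
    (show (1:ℝ) ∈ Set.Ici 0 by norm_num)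
    h0 (show (0:ℝ) ≤ 1 - t by linarith) (show t + (1 - t) = 1 by ring)
  simp only [smul_eq_mul] at h
  have harg : t * 0 + (1 - t) * 1 = 1 - t := by ring
  rw [harg] at h
  simp only [Real.log_one, Real.log_zero] at h
  linarith

private lemma philem_pos (t : ℝ) (h0 : 0 ≤ t) (h1 : t ≤ 1) :
    0 ≤ (1 + t) * Real.log (1 + t) + (1 - t) * Real.log (1 - t) := by
  have h := Real.convexOn_mul_log.2 (show (1 - t) ∈ Set.Ici (0:ℝ) by simp; linarith)
    (show (1 + t) ∈ Set.Ici (0:ℝ) by simp; linarith)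
    (show (0:ℝ) ≤ 1/2 by norm_num) (show (0:ℝ) ≤ 1/2 by norm_num)
    (show (1:ℝ)/2 + 1/2 = 1 by norm_num)
  simp only [smul_eq_mul] at h
  have harg : (1:ℝ)/2 * (1 - t) + 1/2 * (1 + t) = 1 := by ring
  rw [harg] at h
  simp only [Real.log_one] at h
  linarith

private lemma key (p : ℝ) (hp0 : 0 ≤ p) (hp : p ≤ 1/2) :
    (1 - binEnt p)^2 + 4 * (p * (1 - p)) ≤ 1 := by
  rcases eq_or_lt_of_le hp0 with h0 | h0
  · have : p = 0 := h0.symm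
    subst this
    simp [binEnt]
  · set t : ℝ := 1 - 2 * p with ht
    have ht0 : 0 ≤ t := by simp [ht]; linarith
    have ht1 : t ≤ 1 := by simp [ht]; linarith
    have hlog2 : (0:ℝ) < Real.log 2 := Real.log_pos (by norm_num)
    have hq : (0:ℝ) < 1 - p := by linarith
    have hE : 1 - binEnt p =
        ((1 + t) * Real.log (1 + t) + (1 - t) * Real.log (1 - t)) / (2 * Real.log 2) := by
      have h1t : (1 + t) = 2 * (1 - p) := by rw [ht]; ring
      have h2t : (1 - t) = 2 * p := by rw [ht]; ring
      rw [h1t, h2t, Real.log_mul (by norm_num) (ne_of_gt hq),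
        Real.log_mul (by norm_num) (ne_of_gt h0)]
      simp only [binEnt, Real.logb, div_eq_iff (by positivity : (2:ℝ) * Real.log 2 ≠ 0)]
      field_simp
      ring
    have hA := philem_upper t ht0 ht1
    have hB := philem_pos t ht0 ht1
    have hup : 1 - binEnt p ≤ t := by
      rw [hE, div_le_iff₀ (by positivity)]
      have hC := philem_neg t ht0 ht1
      nlinarith
    have hlo : 0 ≤ 1 - binEnt p := by
      rw [hE]
      positivity
    have h4p : 4 * (p * (1 - p)) = 1 - t^2 := by rw [ht]; ring
    nlinarith

/-- Arikan's inequality `I² + Z² ≤ 1` for a BSC: with symmetric capacity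
`I = 1 − h₂(p)` and Bhattacharyya parameter `Z = 2√(p(1−p))`. -/
theorem bsc_I_sq_add_Z_sq_le_one (p : ℝ) (hp : p ∈ Set.Icc (0:ℝ) 1) :
    (1 - binEnt p)^2 + (2 * Real.sqrt (p * (1 - p)))^2 ≤ 1 := by
  obtain ⟨hp0, hp1⟩ := hp
  have hpq : 0 ≤ p * (1 - p) := mul_nonneg hp0 (by linarith)
  have hsq : (2 * Real.sqrt (p * (1 - p)))^2 = 4 * (p * (1 - p)) := by
    rw [mul_pow, Real.sq_sqrt hpq]; ring
  rw [hsq]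
  rcases le_or_gt p (1/2) with h | h
  · exact key p hp0 h
  · have hsymm : binEnt p = binEnt (1 - p) := by
      simp [binEnt]; ring
    have := key (1 - p) (by linarith) (by linarith)
    rw [hsymm]
    calc (1 - binEnt (1 - p))^2 + 4 * (p * (1 - p))
        = (1 - binEnt (1 - p))^2 + 4 * ((1 - p) * (1 - (1 - p))) := by ring
      _ ≤ 1 := this
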